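/- Let K be a finite field, n a positive integer, and f : K^n → K^n a map whose dependency graph is acyclic. Then f has no nontrivial periodic orbits: for every x ∈ K^n and every m ≥ 1, if f^m(x) = x then x is the fixed point of f (i.e., f(x) = x). -/

import Mathlib

/-- The coordinate function `h : K^n → K` depends on variable `x_j`. -/
def CoordDependsOn {n : ℕ} {K : Type*} (h : (Fin n → K) → K) (j : Fin n) : Prop :=
  ∃ (x : Fin n → K) (p q : K), p ≠ q ∧
    h (Function.update x j p) ≠ h (Function.update x j q)

/-- Edge from `j` to `i` in the dependency graph of `f`. -/
def DepEdge {n : ℕ} {K : Type*} (f : (Fin n → K) → (Fin n → K)) (j i : Fin n) : Prop :=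
  CoordDependsOn (fun x => f x i) j

/-- The dependency graph of `f` is acyclic (no directed cycles, no self-loops). -/
def DepAcyclic {n : ℕ} {K : Type*} (f : (Fin n → K) → (Fin n → K)) : Prop :=
  ¬ ∃ (m : ℕ) (v : ℕ → Fin n), 1 ≤ m ∧ v 0 = v m ∧
      ∀ t < m, DepEdge f (v t) (v (t + 1))

/-!
Acyclicity makes the dependency relation well founded, so one may induct on coordinates.
If every coordinate that `f_i` depends on is constant along the orbit of `x`, then the
`i`-th coordinate of `f^[t+1] x` is `f_i x` for all `t`; periodicity of `x` forces this
value to be `x_i`, so the `i`-th coordinate is constant along the orbit too.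
-/

open Function

section CoordDependsOn

variable {n : ℕ} {K : Type*} {h : (Fin n → K) → K}

theorem apply_update_eq_of_not_coordDependsOn {j : Fin n} (hj : ¬ CoordDependsOn h j)
    (x : Fin n → K) (p : K) : h (update x j p) = h x := by
  by_cases hp : p = x j
  · rw [hp, update_eq_self]
  · by_contra hne
    exact hj ⟨x, p, x j, hp, by rwa [update_eq_self]⟩

theorem apply_eq_of_forall_coordDependsOn {y z : Fin n → K}
    (hyz : ∀ j, CoordDependsOn h j → y j = z j) : h y = h z := by
  classical
  suffices ∀ s : Finset (Fin n), h (s.piecewise z y) = h y by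
    simpa using (this Finset.univ).symm
  intro s
  induction s using Finset.induction_on with
  | empty => simp
  | insert a s ha ih =>
    rw [Finset.piecewise_insert]
    by_cases hd : CoordDependsOn h a
    · rw [← hyz a hd, ← Finset.piecewise_eq_of_notMem s z y ha, update_eq_self, ih]
    · rw [apply_update_eq_of_not_coordDependsOn hd, ih]

end CoordDependsOn

namespace DepAcyclic

variable {n : ℕ} {K : Type*} {f : (Fin n → K) → (Fin n → K)}

/-- A descending chain of the finite relation `DepEdge f` repeats a vertex, and the segment
between the two visits, read backwards, is a cycle. -/
theorem wellFounded (hf : DepAcyclic f) : WellFounded (DepEdge f) := by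
  rw [wellFounded_iff_isEmpty_descending_chain]
  refine ⟨fun ⟨v, hv⟩ => ?_⟩
  obtain ⟨a, b, hab, hvab⟩ := Finite.exists_ne_map_eq_of_infinite v
  wlog hlt : a < b generalizing a b
  · exact this b a hab.symm hvab.symm (by omega)
  refine hf ⟨b - a, fun t => v (b - t), by omega, by simp [Nat.sub_sub_self hlt.le, hvab],
    fun t ht => ?_⟩
  simpa [show b - (t + 1) + 1 = b - t by omega] using hv (b - (t + 1))

theorem iterate_apply_eq_of_isPeriodicPt (hf : DepAcyclic f) {m : ℕ} (hm : 0 < m)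
    {x : Fin n → K} (hx : IsPeriodicPt f m x) (i : Fin n) (t : ℕ) : f^[t] x i = x i := by
  induction i using hf.wellFounded.induction generalizing t with
  | _ i ih =>
    have hstep : ∀ s, f^[s + 1] x i = f x i := fun s => by
      rw [iterate_succ_apply']
      exact apply_eq_of_forall_coordDependsOn fun j hj => ih j hj s
    have hfix : f x i = x i := by
      obtain ⟨k, rfl⟩ : ∃ k, m = k + 1 := ⟨m - 1, by omega⟩
      rw [← hstep k, hx.eq]
    rcases t with _ | s
    · rfl
    · rw [hstep, hfix]

end DepAcyclic

theorem no_periodic_orbits_of_acyclic_general {K : Type*} {n : ℕ}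
    (f : (Fin n → K) → (Fin n → K)) (hf : DepAcyclic f) :
    ∀ (x : Fin n → K) (m : ℕ), 1 ≤ m → (f^[m]) x = x → f x = x := by
  intro x m hm hx
  funext i
  exact hf.iterate_apply_eq_of_isPeriodicPt hm hx i 1

/-- A map `f : K^n → K^n` with acyclic dependency graph has no nontrivial
periodic orbits: any periodic point is a fixed point. -/
theorem no_periodic_orbits_of_acyclic {K : Type*} [Field K] [Fintype K] {n : ℕ}
    (hn : 0 < n) (f : (Fin n → K) → (Fin n → K)) (hf : DepAcyclic f) :
    ∀ (x : Fin n → K) (m : ℕ), 1 ≤ m → (f^[m]) x = x → f x = x :=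
  no_periodic_orbits_of_acyclic_general f hf
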